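/- For all nonnegative integers n, the identity ∑_{i≥0} C(2n+i+1, n)·x^i = 1/(x^{n+1}(1−x)^{n+1}) − ∑_{ℓ=0}^{n} C(2n−ℓ, n)·x^{−ℓ−1} holds as an identity of formal Laurent series in x over ℚ. -/

import Mathlib

/-!
Since `(1 - x)⁻¹ ^ (n + 1) = ∑ₖ C(n + k, n) xᵏ`, split this series after its `xⁿ` term and divide
by `x ^ (n + 1)`: the tail becomes the left-hand side, and the first `n + 1` terms become the
finite sum of negative powers, reindexed by `ℓ = n - k`.
-/

namespace HahnSeries

theorem ofPowerSeries_trunc {Γ R : Type*} [Semiring Γ] [PartialOrder Γ] [IsStrictOrderedRing Γ]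
    [CommSemiring R] (N : ℕ) (f : PowerSeries R) :
    ofPowerSeries Γ R (f.trunc N) =
      ∑ k ∈ Finset.range N, single (k : Γ) (PowerSeries.coeff k f) := by
  rw [PowerSeries.trunc_apply, ← Finset.range_eq_Ico,
    ← Polynomial.coeToPowerSeries.ringHom_apply, map_sum, map_sum]
  refine Finset.sum_congr rfl fun k _ => ?_
  rw [Polynomial.coeToPowerSeries.ringHom_apply, Polynomial.coe_monomial,
    PowerSeries.monomial_eq_C_mul_X_pow, map_mul, ofPowerSeries_C, ofPowerSeries_X_pow, C_apply,
    single_mul_single, zero_add, mul_one]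

theorem inv_ofPowerSeries_X_pow_mul {K : Type*} [Field K] (m : ℕ) {f g : PowerSeries K}
    (hfg : f * g = 1) :
    (ofPowerSeries ℤ K (PowerSeries.X ^ m * f))⁻¹ =
      single (-(m : ℤ)) 1 * ofPowerSeries ℤ K g := by
  apply inv_eq_of_mul_eq_one_right
  rw [map_mul, ofPowerSeries_X_pow, mul_mul_mul_comm, single_mul_single, add_neg_cancel,
    mul_one, single_zero_one, one_mul, ← map_mul, hfg, map_one]

end HahnSeries

open PowerSeries

theorem laurent_identity_general (n : ℕ) :
    (HahnSeries.ofPowerSeries ℤ ℚ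
        (PowerSeries.mk fun i => ((2 * n + i + 1).choose n : ℚ)))
      = (HahnSeries.ofPowerSeries ℤ ℚ
            (PowerSeries.X ^ (n + 1) * (1 - PowerSeries.X) ^ (n + 1)))⁻¹
        - ∑ ℓ ∈ Finset.range (n + 1),
            HahnSeries.single (-(ℓ + 1) : ℤ) (((2 * n - ℓ).choose n : ℚ)) := by
  set u : ℚ⟦X⟧ := mk fun k => ((n + k).choose n : ℚ)
  have hinv : (1 - X) ^ (n + 1) * u = 1 := by
    rw [mul_comm]
    exact mk_add_choose_mul_one_sub_pow_eq_one ℚ n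
  have hsplit := eq_X_pow_mul_shift_add_trunc (n + 1) u
  have htail : (mk fun i => coeff (i + (n + 1)) u) =
      mk fun i => ((2 * n + i + 1).choose n : ℚ) := by
    ext i
    simp only [u, coeff_mk]
    congr 2
    ring
  have hhead : HahnSeries.single (-((n + 1 : ℕ) : ℤ)) (1 : ℚ) *
        HahnSeries.ofPowerSeries ℤ ℚ (u.trunc (n + 1)) =
      ∑ ℓ ∈ Finset.range (n + 1),
        HahnSeries.single (-(ℓ + 1) : ℤ) (((2 * n - ℓ).choose n : ℚ)) := by
    rw [HahnSeries.ofPowerSeries_trunc, Finset.mul_sum, ← Finset.sum_range_reflect]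
    refine Finset.sum_congr rfl fun ℓ hℓ => ?_
    rw [Finset.mem_range] at hℓ
    rw [HahnSeries.single_mul_single, one_mul, coeff_mk,
      show n + (n + 1 - 1 - ℓ) = 2 * n - ℓ by omega]
    congr 2
    omega
  rw [HahnSeries.inv_ofPowerSeries_X_pow_mul (n + 1) hinv, hsplit, htail, map_add, mul_add, hhead,
    map_mul, HahnSeries.ofPowerSeries_X_pow, ← mul_assoc, HahnSeries.single_mul_single,
    neg_add_cancel, mul_one, HahnSeries.single_zero_one, one_mul, add_sub_cancel_right]
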